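/- For d prime, any integer λ with 1 ≤ |λ| ≤ d-1, and any integer μ with 0 ≤ |μ| ≤ d-1, the absolute value of the sum ∑_{k=0}^{d-1} exp(iπ[k(d-k)λ + 2kμ]/d) equals √d. -/

import Mathlib

/-!
Extend the summand to a function `F` on `ℤ`. It has modulus one, is `d`-periodic and satisfies
`F (a + b) = F a * F b * e(-λab/d)` with `e(x) = exp(2πix)`. Hence
`|S|² = ∑_{y,t} F(y+t) conj F(y) = ∑_t F(t) ∑_y e(-λyt/d)`, and since `λ` is invertible modulo `d`
the inner character sum vanishes unless `t ≡ 0`, leaving `|S|² = d F(0) = d`. Unlike a reduction to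
quadratic Gauss sums, this needs no inverse of `2` modulo `d`.
-/

open Complex Finset ComplexConjugate

lemma Finset.sum_range_eq_sum_zmod_val {M : Type*} [AddCommMonoid M] (d : ℕ) [NeZero d]
    (f : ℕ → M) : ∑ k ∈ range d, f k = ∑ x : ZMod d, f x.val :=
  (sum_nbij' ZMod.val (↑) (fun x _ => mem_range.mpr x.val_lt) (fun _ _ => mem_univ _)
    (fun x _ => ZMod.natCast_zmod_val x) (fun _ hk => ZMod.val_natCast_of_lt (mem_range.mp hk))
    (fun _ _ => rfl)).symm

noncomputable def quadPhase (d : ℕ) (lam mu k : ℤ) : ℂ :=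
  exp (I * (Real.pi : ℂ) * ((k * (d - k) * lam + 2 * k * mu) / d))

section quadPhase

variable {d : ℕ} {lam mu : ℤ}

lemma norm_quadPhase (k : ℤ) : ‖quadPhase d lam mu k‖ = 1 := by
  rw [quadPhase, norm_exp]
  simp

lemma quadPhase_mul_conj_self (k : ℤ) :
    quadPhase d lam mu k * conj (quadPhase d lam mu k) = 1 := by
  rw [mul_conj', norm_quadPhase]
  norm_num

variable [NeZero d]

lemma quadPhase_add (a b : ℤ) :
    quadPhase d lam mu (a + b) = quadPhase d lam mu a * quadPhase d lam mu b *
      ZMod.stdAddChar ((-(lam * a * b) : ℤ) : ZMod d) := by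
  rw [ZMod.stdAddChar_coe, quadPhase, quadPhase, quadPhase, ← exp_add, ← exp_add]
  congr 1
  push_cast
  ring

lemma quadPhase_self : quadPhase d lam mu d = 1 := by
  have hd : (d : ℂ) ≠ 0 := NeZero.ne _
  rw [quadPhase, ← exp_int_mul_two_pi_mul_I mu]
  congr 1
  field_simp
  push_cast
  ring

lemma periodic_quadPhase : Function.Periodic (quadPhase d lam mu) d := by
  intro a
  simp [quadPhase_add, quadPhase_self]

lemma quadPhase_val_intCast (n : ℤ) :
    quadPhase d lam mu (n : ZMod d).val = quadPhase d lam mu n := by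
  rw [ZMod.val_intCast, Int.emod_def, mul_comm]
  exact periodic_quadPhase.sub_int_mul_eq _

lemma quadPhase_val_add_mul_conj (y t : ZMod d) :
    quadPhase d lam mu (y + t).val * conj (quadPhase d lam mu y.val) =
      quadPhase d lam mu t.val * ZMod.stdAddChar (y * (-(lam : ZMod d) * t)) := by
  have hyt : y + t = ((y.val + t.val : ℤ) : ZMod d) := by simp
  have hcross : y * (-(lam : ZMod d) * t) = ((-(lam * y.val * t.val) : ℤ) : ZMod d) := by
    push_cast
    simp only [ZMod.natCast_zmod_val]
    ring
  rw [hyt, quadPhase_val_intCast, quadPhase_add, hcross]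
  linear_combination (quadPhase d lam mu t.val * ZMod.stdAddChar (N := d) _) *
    quadPhase_mul_conj_self (d := d) y.val

theorem sum_quadPhase_val_mul_conj (hlam : IsUnit (lam : ZMod d)) :
    (∑ x : ZMod d, quadPhase d lam mu x.val) * conj (∑ x : ZMod d, quadPhase d lam mu x.val) =
      d := by
  classical
  calc _ = ∑ y : ZMod d, ∑ t : ZMod d,
        quadPhase d lam mu (y + t).val * conj (quadPhase d lam mu y.val) := by
        rw [map_sum, sum_mul_sum, sum_comm]
        exact sum_congr rfl fun y _ => (Fintype.sum_equiv (Equiv.addLeft y) _ _ fun _ => rfl).symm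
    _ = ∑ t : ZMod d,
        quadPhase d lam mu t.val * ∑ y : ZMod d, ZMod.stdAddChar (y * (-(lam : ZMod d) * t)) := by
        simp only [quadPhase_val_add_mul_conj, mul_sum]
        exact sum_comm
    _ = d := by
        simp only [AddChar.sum_mulShift _ (ZMod.isPrimitive_stdAddChar d),
          hlam.neg.mul_right_eq_zero, ZMod.card]
        simp [quadPhase]

theorem norm_sum_range_quadPhase (mu : ℤ) (hlam : IsUnit (lam : ZMod d)) :
    ‖∑ k ∈ range d, quadPhase d lam mu k‖ = √d := by
  have hsq : ‖∑ k ∈ range d, quadPhase d lam mu k‖ ^ 2 = d := by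
    rw [sum_range_eq_sum_zmod_val d (fun k => quadPhase d lam mu k)]
    exact_mod_cast (mul_conj' _).symm.trans (sum_quadPhase_val_mul_conj hlam)
  rw [← hsq, Real.sqrt_sq (norm_nonneg _)]

end quadPhase

theorem stmt_0 (d : ℕ) (hd : d.Prime) (lam mu : ℤ)
    (hlam1 : 1 ≤ |lam|) (hlam2 : |lam| ≤ (d : ℤ) - 1) :
    ‖(∑ k ∈ Finset.range d,
      Complex.exp (Complex.I * (Real.pi : ℂ) *
        (((k : ℂ) * ((d : ℂ) - (k : ℂ)) * (lam : ℂ) + 2 * (k : ℂ) * (mu : ℂ)) / (d : ℂ))))‖ =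
    Real.sqrt d := by
  have := Fact.mk hd
  have hlam : IsUnit (lam : ZMod d) := by
    rw [isUnit_iff_ne_zero, Ne, ZMod.intCast_zmod_eq_zero_iff_dvd]
    intro hdvd
    have := Int.le_of_dvd (by omega) ((dvd_abs _ _).mpr hdvd)
    omega
  simpa only [quadPhase, Int.cast_natCast] using norm_sum_range_quadPhase mu hlam
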